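/- arXiv:2102.00657 — 2 statements merged into one kernel-verified Lean document; each statement's English description precedes it below -/
import Mathlib

section
/- Let β > 0 and suppose F: [0,∞)×ℝ³×ℝ³ → ℝ satisfies |F(t,x,v)| ≤ R·e^{-β(|x|²+|v|²)} for all t, x, v. Then for all t ≥ 0 and all x, v ∈ ℝ³: ∫₀^t ∫_{ℝ³} |v-u| · |F(τ, x+τ(v-u), u)| · |F(τ, x, v)| du dτ ≤ C β^{-2} R² e^{-β(|x|²+|v|²)} for a universal constant C > 0. -/
/-!
Bounding `|F|` by its Gaussian majorant reduces the integrand to `R² e^{-β(|x|²+|v|²)}` times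
`|v-u| e^{-β|x+τ(v-u)|²} e^{-β|u|²}`. After exchanging the order of integration, the `τ`-integral
is a Gaussian along the line `τ ↦ x + τ(v-u)`; its speed `|v-u|` cancels the weight `|v-u|`, so the
integral is at most `√(π/β)` uniformly in `u` (dispersion). The remaining Gaussian in `u` integrates
to `(π/β)^{3/2}`, giving the constant `C = π²`.
-/

open MeasureTheory Real
open scoped RealInnerProductSpace

theorem mul_exp_neg_mul_sq_le {β : ℝ} (hβ : 0 < β) (r : ℝ) :
    r * exp (-β * r ^ 2) ≤ exp (-(β / 2) * r ^ 2) / √β := by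
  have hsq : √β ^ 2 = β := sq_sqrt hβ.le
  -- `√β r ≤ (1 + β r²) / 2 ≤ 1 + β r² / 2 ≤ e^{β r² / 2}`
  have hlin : √β * r ≤ exp (β / 2 * r ^ 2) := by
    nlinarith [add_one_le_exp (β / 2 * r ^ 2), sq_nonneg (√β * r - 1)]
  rw [le_div_iff₀ (sqrt_pos.mpr hβ), mul_right_comm, mul_comm r,
    show -(β / 2) * r ^ 2 = β / 2 * r ^ 2 + -β * r ^ 2 by ring, exp_add]
  gcongr

section InnerProductSpace

variable {E : Type*} [NormedAddCommGroup E] [InnerProductSpace ℝ E]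

theorem norm_sq_mul_add_inner_div_sq_le_norm_add_smul_sq (x w : E) (τ : ℝ) :
    ‖w‖ ^ 2 * (τ + ⟪x, w⟫ / ‖w‖ ^ 2) ^ 2 ≤ ‖x + τ • w‖ ^ 2 := by
  rcases eq_or_ne w 0 with rfl | hw
  · simp
  have hinner : ⟪x + τ • w, w⟫ = ‖w‖ ^ 2 * (τ + ⟪x, w⟫ / ‖w‖ ^ 2) := by
    rw [inner_add_left, real_inner_smul_left, real_inner_self_eq_norm_sq]
    field_simp
    ring
  have hcs := real_inner_mul_inner_self_le (x + τ • w) w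
  rw [hinner, real_inner_self_eq_norm_sq, real_inner_self_eq_norm_sq] at hcs
  have hw2 : (0 : ℝ) < ‖w‖ ^ 2 := by positivity
  nlinarith

theorem setIntegral_norm_mul_exp_neg_mul_sq_norm_add_smul_le {β : ℝ} (hβ : 0 < β) (s : Set ℝ)
    (x w : E) : ∫ τ in s, ‖w‖ * exp (-β * ‖x + τ • w‖ ^ 2) ≤ √(π / β) := by
  rcases eq_or_ne w 0 with rfl | hw
  · simp [sqrt_nonneg]
  set a := ⟪x, w⟫ / ‖w‖ ^ 2
  set g : ℝ → ℝ := fun τ ↦ ‖w‖ * exp (-(β * ‖w‖ ^ 2) * (τ + a) ^ 2)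
  have hg : Integrable g :=
    ((integrable_exp_neg_mul_sq (by positivity)).comp_add_right a).const_mul _
  calc ∫ τ in s, ‖w‖ * exp (-β * ‖x + τ • w‖ ^ 2)
      ≤ ∫ τ in s, g τ := by
        refine integral_mono_of_nonneg (.of_forall fun τ ↦ by positivity) hg.integrableOn
          (.of_forall fun τ ↦ ?_)
        have := norm_sq_mul_add_inner_div_sq_le_norm_add_smul_sq x w τ
        exact mul_le_mul_of_nonneg_left (exp_le_exp.mpr (by nlinarith)) (norm_nonneg w)
    _ ≤ ∫ τ, g τ := setIntegral_le_integral hg (.of_forall fun τ ↦ by positivity)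
    _ = ‖w‖ * √(π / (β * ‖w‖ ^ 2)) := by
        rw [integral_const_mul, integral_add_right_eq_self (fun τ ↦ exp (-(β * ‖w‖ ^ 2) * τ ^ 2)),
          integral_gaussian]
    _ = √(π / β) := by
        rw [← div_div, sqrt_div' _ (by positivity), sqrt_sq (norm_nonneg w)]
        field_simp

noncomputable def gaussianLossKernel (β : ℝ) (x v : E) (τ : ℝ) (u : E) : ℝ :=
  ‖v - u‖ * exp (-β * ‖x + τ • (v - u)‖ ^ 2) * exp (-β * ‖u‖ ^ 2)

variable {β : ℝ} {x v : E}

theorem gaussianLossKernel_nonneg (τ : ℝ) (u : E) : 0 ≤ gaussianLossKernel β x v τ u := by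
  unfold gaussianLossKernel; positivity

theorem gaussianLossKernel_le (hβ : 0 ≤ β) (τ : ℝ) (u : E) :
    gaussianLossKernel β x v τ u ≤ ‖v - u‖ * exp (-β * ‖u‖ ^ 2) :=
  calc gaussianLossKernel β x v τ u ≤ ‖v - u‖ * 1 * exp (-β * ‖u‖ ^ 2) := by
        unfold gaussianLossKernel
        gcongr
        exact exp_le_one_iff.mpr (by nlinarith [sq_nonneg ‖x + τ • (v - u)‖])
    _ = ‖v - u‖ * exp (-β * ‖u‖ ^ 2) := by rw [mul_one]

theorem continuous_uncurry_gaussianLossKernel :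
    Continuous (Function.uncurry (gaussianLossKernel β x v)) := by
  unfold gaussianLossKernel; fun_prop

theorem setIntegral_gaussianLossKernel_le (hβ : 0 < β) (s : Set ℝ) (u : E) :
    ∫ τ in s, gaussianLossKernel β x v τ u ≤ √(π / β) * exp (-β * ‖u‖ ^ 2) := by
  unfold gaussianLossKernel
  rw [integral_mul_const]
  gcongr
  exact setIntegral_norm_mul_exp_neg_mul_sq_norm_add_smul_le hβ s x (v - u)

theorem norm_sub_mul_abs_mul_abs_le_gaussianLossKernel {R : ℝ} {F : ℝ → E → E → ℝ}
    (hF : ∀ t x v, |F t x v| ≤ R * exp (-β * (‖x‖ ^ 2 + ‖v‖ ^ 2))) (τ : ℝ) (u : E) :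
    ‖v - u‖ * |F τ (x + τ • (v - u)) u| * |F τ x v|
      ≤ gaussianLossKernel β x v τ u * (R ^ 2 * exp (-β * (‖x‖ ^ 2 + ‖v‖ ^ 2))) := by
  have hFy := hF τ (x + τ • (v - u)) u
  calc ‖v - u‖ * |F τ (x + τ • (v - u)) u| * |F τ x v|
      ≤ ‖v - u‖ * (R * exp (-β * (‖x + τ • (v - u)‖ ^ 2 + ‖u‖ ^ 2)))
          * (R * exp (-β * (‖x‖ ^ 2 + ‖v‖ ^ 2))) :=
        mul_le_mul (mul_le_mul_of_nonneg_left hFy (norm_nonneg _)) (hF τ x v) (abs_nonneg _)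
          (mul_nonneg (norm_nonneg _) ((abs_nonneg _).trans hFy))
    _ = gaussianLossKernel β x v τ u * (R ^ 2 * exp (-β * (‖x‖ ^ 2 + ‖v‖ ^ 2))) := by
        simp only [gaussianLossKernel, mul_add, neg_mul, exp_add]
        ring

variable [FiniteDimensional ℝ E] [MeasurableSpace E] [BorelSpace E]

theorem integrable_exp_neg_mul_sq_norm (hβ : 0 < β) :
    Integrable fun u : E ↦ exp (-β * ‖u‖ ^ 2) :=
  .of_integral_ne_zero <| by rw [GaussianFourier.integral_rexp_neg_mul_sq_norm hβ]; positivity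

theorem integrable_norm_sub_mul_exp_neg_mul_sq_norm (hβ : 0 < β) (v : E) :
    Integrable fun u : E ↦ ‖v - u‖ * exp (-β * ‖u‖ ^ 2) := by
  have hdom : Integrable fun u : E ↦
      ‖v‖ * exp (-β * ‖u‖ ^ 2) + exp (-(β / 2) * ‖u‖ ^ 2) / √β :=
    ((integrable_exp_neg_mul_sq_norm hβ).const_mul _).add
      ((integrable_exp_neg_mul_sq_norm (half_pos hβ)).div_const _)
  refine hdom.mono' (by fun_prop) (.of_forall fun u ↦ ?_)
  rw [norm_of_nonneg (by positivity)]
  have := mul_exp_neg_mul_sq_le hβ ‖u‖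
  have := norm_sub_le v u
  nlinarith [exp_pos (-β * ‖u‖ ^ 2)]

theorem integrable_gaussianLossKernel (hβ : 0 < β) (τ : ℝ) :
    Integrable (gaussianLossKernel β x v τ) :=
  (integrable_norm_sub_mul_exp_neg_mul_sq_norm hβ v).mono'
    (continuous_uncurry_gaussianLossKernel.comp (.prodMk_right τ)).aestronglyMeasurable
    (.of_forall fun u ↦ (norm_of_nonneg (gaussianLossKernel_nonneg τ u)).trans_le
      (gaussianLossKernel_le hβ.le τ u))

theorem integrable_uncurry_gaussianLossKernel (hβ : 0 < β) {s : Set ℝ} (hs : volume s ≠ ⊤) :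
    Integrable (Function.uncurry (gaussianLossKernel β x v)) ((volume.restrict s).prod volume) := by
  have : IsFiniteMeasure (volume.restrict s) := isFiniteMeasure_restrict.mpr hs
  refine ((integrable_const (1 : ℝ)).mul_prod
    (integrable_norm_sub_mul_exp_neg_mul_sq_norm hβ v)).mono'
    continuous_uncurry_gaussianLossKernel.aestronglyMeasurable (.of_forall fun ⟨τ, u⟩ ↦ ?_)
  rw [Function.uncurry_apply_pair, norm_of_nonneg (gaussianLossKernel_nonneg τ u), one_mul]
  exact gaussianLossKernel_le hβ.le τ u

theorem setIntegral_integral_gaussianLossKernel_le (hβ : 0 < β) {s : Set ℝ} (hs : volume s ≠ ⊤) :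
    ∫ τ in s, ∫ u, gaussianLossKernel β x v τ u
      ≤ √(π / β) * (π / β) ^ (Module.finrank ℝ E / 2 : ℝ) :=
  calc ∫ τ in s, ∫ u, gaussianLossKernel β x v τ u
      = ∫ u, ∫ τ in s, gaussianLossKernel β x v τ u :=
        integral_integral_swap (integrable_uncurry_gaussianLossKernel hβ hs)
    _ ≤ ∫ u : E, √(π / β) * exp (-β * ‖u‖ ^ 2) :=
        integral_mono_of_nonneg
          (.of_forall fun u ↦ integral_nonneg fun τ ↦ gaussianLossKernel_nonneg τ u)
          ((integrable_exp_neg_mul_sq_norm hβ).const_mul _)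
          (.of_forall (setIntegral_gaussianLossKernel_le hβ s))
    _ = √(π / β) * (π / β) ^ (Module.finrank ℝ E / 2 : ℝ) := by
        rw [integral_const_mul, GaussianFourier.integral_rexp_neg_mul_sq_norm hβ]

end InnerProductSpace

theorem vacuum_loss_term_estimate :
    ∃ C : ℝ, 0 < C ∧
      ∀ (β R : ℝ), 0 < β →
        ∀ F : ℝ → EuclideanSpace ℝ (Fin 3) → EuclideanSpace ℝ (Fin 3) → ℝ,
          (∀ t x v, |F t x v| ≤ R * Real.exp (-β * (‖x‖ ^ 2 + ‖v‖ ^ 2))) →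
          ∀ t : ℝ, 0 ≤ t → ∀ x v : EuclideanSpace ℝ (Fin 3),
            (∫ τ in Set.Icc (0 : ℝ) t,
                ∫ u : EuclideanSpace ℝ (Fin 3),
                  ‖v - u‖ * |F τ (x + τ • (v - u)) u| * |F τ x v|)
              ≤ C * β⁻¹ ^ 2 * R ^ 2 * Real.exp (-β * (‖x‖ ^ 2 + ‖v‖ ^ 2)) := by
  refine ⟨π ^ 2, by positivity, fun β R hβ F hF t _ x v ↦ ?_⟩
  set K := R ^ 2 * exp (-β * (‖x‖ ^ 2 + ‖v‖ ^ 2))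
  have hs : volume (Set.Icc (0 : ℝ) t) ≠ ⊤ := measure_Icc_lt_top.ne
  have hinner (τ : ℝ) :
      ∫ u, ‖v - u‖ * |F τ (x + τ • (v - u)) u| * |F τ x v|
        ≤ (∫ u, gaussianLossKernel β x v τ u) * K :=
    (integral_mono_of_nonneg (.of_forall fun u ↦ by positivity)
      ((integrable_gaussianLossKernel hβ τ).mul_const K)
      (.of_forall (norm_sub_mul_abs_mul_abs_le_gaussianLossKernel hF τ))).trans_eq
      (integral_mul_const K _)
  calc (∫ τ in Set.Icc (0 : ℝ) t, ∫ u, ‖v - u‖ * |F τ (x + τ • (v - u)) u| * |F τ x v|)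
      ≤ ∫ τ in Set.Icc (0 : ℝ) t, (∫ u, gaussianLossKernel β x v τ u) * K :=
        integral_mono_of_nonneg (.of_forall fun τ ↦ integral_nonneg fun u ↦ by positivity)
          ((integrable_uncurry_gaussianLossKernel hβ hs).integral_prod_left.mul_const K)
          (.of_forall hinner)
    _ = (∫ τ in Set.Icc (0 : ℝ) t, ∫ u, gaussianLossKernel β x v τ u) * K :=
        integral_mul_const K _
    _ ≤ √(π / β) * (π / β) ^ (3 / 2 : ℝ) * K := by
        gcongr
        simpa using setIntegral_integral_gaussianLossKernel_le (x := x) (v := v) hβ hs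
    _ = π ^ 2 * β⁻¹ ^ 2 * R ^ 2 * exp (-β * (‖x‖ ^ 2 + ‖v‖ ^ 2)) := by
        rw [sqrt_eq_rpow, ← rpow_add (by positivity)]
        norm_num [K, div_pow]
        ring
end

section
/- Let μ(v) = 1/(ρe^{|v|²}-θ) with ρ > 1, θ ∈ {-1,1}, and suppose u+v = u'+v' and |u|²+|v|² = |u'|²+|v'|². Then μ(u)μ(v)μ(u')μ(v') ρ² e^{|u|²+|v|²} is bounded above and below by positive constants times e^{-|u|²-|v|²} · e^{|u|²+|v|²} · e^{-|u'|²-|v'|²} = e^{-|u|²-|v|²}; more precisely there exist c₁, c₂ > 0 depending only on ρ with c₁ e^{-|u|²-|v|²} ≤ μ(u)μ(v)μ(u')μ(v') ρ² e^{|u|²+|v|²} ≤ c₂ e^{-|u|²-|v|²}. -/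
/-!
Since `e^{|w|²} ≥ 1` and `|θ| ≤ 1`, the weighted quantum Maxwellian `μ(w) e^{|w|²} = (ρ - θ e^{-|w|²})⁻¹`
stays between `(ρ + 1)⁻¹` and `(ρ - 1)⁻¹`. Energy conservation turns the product of the four weights
`e^{|u|²} e^{|v|²} e^{|u'|²} e^{|v'|²}` into `e^{2(|u|² + |v|²)}`, so the kernel equals
`ρ² e^{-|u|²-|v|²}` times a product of four weighted Maxwellians.
-/

noncomputable def qMu (ρ θ : ℝ) (v : EuclideanSpace ℝ (Fin 3)) : ℝ :=
  (ρ * Real.exp (‖v‖ ^ 2) - θ)⁻¹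

open Real

lemma inv_mul_sub_mul_mem_Icc {ρ θ E : ℝ} (hρ : 1 < ρ) (hθ : |θ| ≤ 1) (hE : 1 ≤ E) :
    (ρ * E - θ)⁻¹ * E ∈ Set.Icc (ρ + 1)⁻¹ (ρ - 1)⁻¹ := by
  obtain ⟨hθ₁, hθ₂⟩ := abs_le.mp hθ
  have hden : 0 < ρ * E - θ := by nlinarith
  rw [Set.mem_Icc, ← div_eq_inv_mul, inv_eq_one_div, inv_eq_one_div, div_le_div_iff₀ (by linarith) hden,
    div_le_div_iff₀ hden (by linarith)]
  constructor <;> nlinarith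

lemma qMu_mul_exp_mem_Icc {ρ θ : ℝ} (hρ : 1 < ρ) (hθ : |θ| ≤ 1) (w : EuclideanSpace ℝ (Fin 3)) :
    qMu ρ θ w * exp (‖w‖ ^ 2) ∈ Set.Icc (ρ + 1)⁻¹ (ρ - 1)⁻¹ :=
  inv_mul_sub_mul_mem_Icc hρ hθ (one_le_exp (by positivity))

lemma qMu_collision_product_eq (ρ θ : ℝ) {u v u' v' : EuclideanSpace ℝ (Fin 3)}
    (henergy : ‖u‖ ^ 2 + ‖v‖ ^ 2 = ‖u'‖ ^ 2 + ‖v'‖ ^ 2) :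
    qMu ρ θ u * qMu ρ θ v * qMu ρ θ u' * qMu ρ θ v' * ρ ^ 2 * exp (‖u‖ ^ 2 + ‖v‖ ^ 2) =
      ρ ^ 2 * (qMu ρ θ u * exp (‖u‖ ^ 2) * (qMu ρ θ v * exp (‖v‖ ^ 2)) *
        (qMu ρ θ u' * exp (‖u'‖ ^ 2)) * (qMu ρ θ v' * exp (‖v'‖ ^ 2))) *
        exp (-‖u‖ ^ 2 - ‖v‖ ^ 2) := by
  have hprimed : exp (‖u'‖ ^ 2) * exp (‖v'‖ ^ 2) = exp (‖u‖ ^ 2 + ‖v‖ ^ 2) := by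
    rw [← exp_add, henergy]
  have hcancel : exp (‖u‖ ^ 2) * exp (‖v‖ ^ 2) * exp (-‖u‖ ^ 2 - ‖v‖ ^ 2) = 1 := by
    rw [← exp_add, ← exp_add, ← exp_zero]
    ring_nf
  set Q := qMu ρ θ u * qMu ρ θ v * qMu ρ θ u' * qMu ρ θ v' * ρ ^ 2
  linear_combination (-Q) * hprimed - Q * exp (‖u'‖ ^ 2) * exp (‖v'‖ ^ 2) * hcancel

lemma mul_mul_mul_mem_Icc_pow {a b x y z w : ℝ} (ha : 0 ≤ a) (hx : x ∈ Set.Icc a b)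
    (hy : y ∈ Set.Icc a b) (hz : z ∈ Set.Icc a b) (hw : w ∈ Set.Icc a b) :
    x * y * z * w ∈ Set.Icc (a ^ 4) (b ^ 4) := by
  obtain ⟨hx₁, hx₂⟩ := hx
  obtain ⟨hy₁, hy₂⟩ := hy
  obtain ⟨hz₁, hz₂⟩ := hz
  obtain ⟨hw₁, hw₂⟩ := hw
  have hx₀ := ha.trans hx₁
  have hy₀ := ha.trans hy₁
  have hz₀ := ha.trans hz₁
  have hw₀ := ha.trans hw₁
  have hb₀ := hx₀.trans hx₂
  constructor
  · calc a ^ 4 = a * a * a * a := by ring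
      _ ≤ x * y * z * w := by gcongr
  · calc x * y * z * w ≤ b * b * b * b := by gcongr
      _ = b ^ 4 := by ring

theorem linearized_kernel_two_sided_bound
    (ρ θ : ℝ) (hρ : 1 < ρ) (hθ : θ = -1 ∨ θ = 1) :
    ∃ c₁ c₂ : ℝ, 0 < c₁ ∧ 0 < c₂ ∧
      ∀ u v u' v' : EuclideanSpace ℝ (Fin 3),
        u + v = u' + v' →
        ‖u‖ ^ 2 + ‖v‖ ^ 2 = ‖u'‖ ^ 2 + ‖v'‖ ^ 2 →
        c₁ * Real.exp (-‖u‖ ^ 2 - ‖v‖ ^ 2)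
            ≤ qMu ρ θ u * qMu ρ θ v * qMu ρ θ u' * qMu ρ θ v'
                * ρ ^ 2 * Real.exp (‖u‖ ^ 2 + ‖v‖ ^ 2) ∧
        qMu ρ θ u * qMu ρ θ v * qMu ρ θ u' * qMu ρ θ v'
                * ρ ^ 2 * Real.exp (‖u‖ ^ 2 + ‖v‖ ^ 2)
            ≤ c₂ * Real.exp (-‖u‖ ^ 2 - ‖v‖ ^ 2) := by
  have hρ₀ : 0 < ρ := by linarith
  have hρ₁ : 0 < ρ - 1 := by linarith
  have hθ₁ : |θ| ≤ 1 := by rcases hθ with rfl | rfl <;> norm_num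
  refine ⟨ρ ^ 2 * (ρ + 1)⁻¹ ^ 4, ρ ^ 2 * (ρ - 1)⁻¹ ^ 4, by positivity, by positivity, ?_⟩
  intro u v u' v' _ henergy
  rw [qMu_collision_product_eq ρ θ henergy]
  obtain ⟨hlower, hupper⟩ := mul_mul_mul_mem_Icc_pow (by positivity)
    (qMu_mul_exp_mem_Icc hρ hθ₁ u) (qMu_mul_exp_mem_Icc hρ hθ₁ v)
    (qMu_mul_exp_mem_Icc hρ hθ₁ u') (qMu_mul_exp_mem_Icc hρ hθ₁ v')
  constructor <;> gcongr
end
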